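/- Define f : ℕ → ℕ by letting f(n) be the minimum of the chromatic number χ(G × H) over all finite digraphs G and H with χ(G) = χ(H) = n. Then either f(n) ≤ 3 for all n, or f(n) → ∞ as n → ∞. -/

import Mathlib

/-- The symmetrization of a digraph: the simple graph in which `u ~ v` iff there is an
arc between them in some direction. -/
def symmG {α : Type} (D : α → α → Prop) : SimpleGraph α where
  Adj u v := u ≠ v ∧ (D u v ∨ D v u)
  symm := ⟨fun u v h => ⟨h.1.symm, h.2.symm⟩⟩
  loopless := ⟨fun u h => h.1 rfl⟩

/-- The chromatic number of a digraph: the least `k` such that its symmetrization is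
properly `k`-colourable. -/
noncomputable def chrNum {α : Type} (D : α → α → Prop) : ℕ :=
  sInf {k : ℕ | (symmG D).Colorable k}

/-- The categorial product of two digraphs. -/
def tensorRel {α β : Type} (G : α → α → Prop) (H : β → β → Prop)
    (p q : α × β) : Prop :=
  G p.1 q.1 ∧ H p.2 q.2

/-- The Poljak–Rödl function: `pr n` is the minimum of `χ(G × H)` over all finite
digraphs `G` and `H` of chromatic number `n`. -/
noncomputable def pr (n : ℕ) : ℕ :=
  sInf {c : ℕ | ∃ (α β : Type) (_ : Fintype α) (_ : Fintype β)
    (G : α → α → Prop) (H : β → β → Prop),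
    chrNum G = n ∧ chrNum H = n ∧ chrNum (tensorRel G H) = c}

/-! The arc digraph `δX` satisfies `χ(X) ≤ 2 ^ χ(δX)` (colour a vertex by the set of colours of
its out-arcs), while `χ(X) ≤ c + 1` forces `χ(δX) ≤ c` for `c ≥ 4` (colour the arc `uv` by an
element of `S(u) \ S(v)`, where `S` sends the colours of `X` injectively to `2`-subsets of
`Fin c`), and `χ(X) ≤ 4` forces `χ(δ²X) ≤ 3`. Hence for every `B` there is `t` with
`χ(δᵗX) ≤ 3` whenever `χ(X) ≤ B`. Since `δᵗG × δᵗH` maps into the loopless digraph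
`δᵗ(G × H)`, if `f ≤ B` everywhere then for `G`, `H` of huge chromatic number with
`χ(G × H) ≤ B` the digraphs `δᵗG`, `δᵗH` still have chromatic number at least `N` while their
product is `3`-colourable, so `f(N) ≤ 3`. Finally `f` is monotone, as chromatic number drops
by at most one when a vertex is deleted, so an unbounded `f` tends to infinity. -/
open Function SimpleGraph

section ChromaticNumber

variable {α β κ : Type} {D : α → α → Prop} {E : β → β → Prop}

def symmG.coloring (φ : α → κ) (hφ : ∀ u v, D u v → φ u ≠ φ v) : (symmG D).Coloring κ :=
  Coloring.mk φ fun {u v} ⟨_, h⟩ => h.elim (hφ u v) fun h' => (hφ v u h').symm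

lemma symmG.coloring_ne (C : (symmG D).Coloring κ) (hD : ∀ v, ¬ D v v) {u v : α} (h : D u v) :
    C u ≠ C v :=
  C.valid ⟨fun he => hD u (he ▸ h), Or.inl h⟩

def RelHom.toSymmGHom (f : D →r E) (hf : ∀ u v, D u v → u ≠ v → f u ≠ f v) :
    symmG D →g symmG E where
  toFun := f
  map_rel' := by
    rintro u v ⟨hne, huv | hvu⟩
    · exact ⟨hf u v huv hne, Or.inl (f.map_rel huv)⟩
    · exact ⟨(hf v u hvu hne.symm).symm, Or.inr (f.map_rel hvu)⟩

lemma chrNum_le_of_colorable {k : ℕ} (h : (symmG D).Colorable k) : chrNum D ≤ k :=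
  Nat.sInf_le h

lemma colorable_chrNum [Finite α] (D : α → α → Prop) : (symmG D).Colorable (chrNum D) := by
  have := Fintype.ofFinite α
  exact Nat.sInf_mem (s := {k | (symmG D).Colorable k}) ⟨_, (symmG D).colorable_of_fintype⟩

lemma chrNum_le_iff_colorable [Finite α] {k : ℕ} : chrNum D ≤ k ↔ (symmG D).Colorable k :=
  ⟨(colorable_chrNum D).mono, chrNum_le_of_colorable⟩

lemma chrNum_le_of_hom [Finite β] (f : symmG D →g symmG E) : chrNum D ≤ chrNum E :=
  chrNum_le_of_colorable ((colorable_chrNum E).of_hom f)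

lemma chrNum_mono [Finite α] {D' : α → α → Prop} (h : D ≤ D') : chrNum D ≤ chrNum D' :=
  chrNum_le_of_hom (Hom.ofLE fun _ _ ⟨hne, huv⟩ => ⟨hne, huv.imp (h _ _) (h _ _)⟩)

lemma chrNum_le_of_relHom_injective [Finite β] (f : D →r E) (hf : Injective f) :
    chrNum D ≤ chrNum E :=
  chrNum_le_of_hom (f.toSymmGHom fun _ _ _ => hf.ne)

lemma chrNum_le_of_relHom_irreflexive [Finite β] (f : D →r E) (hE : ∀ v, ¬ E v v) :
    chrNum D ≤ chrNum E :=
  chrNum_le_of_hom (f.toSymmGHom fun u v huv _ he => hE (f u) (by simpa [he] using f.map_rel huv))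

lemma chrNum_fin_ne (n : ℕ) : chrNum (fun i j : Fin n => i ≠ j) = n := by
  refine le_antisymm (chrNum_le_of_colorable ⟨symmG.coloring id fun _ _ => id⟩) ?_
  obtain ⟨C⟩ := colorable_chrNum (fun i j : Fin n => i ≠ j)
  simpa using Fintype.card_le_of_injective C fun u v h =>
    by_contra fun hne => C.valid ⟨hne, Or.inl hne⟩ h

end ChromaticNumber

section Restriction

variable {α : Type} (D : α → α → Prop)

lemma chrNum_subrel_empty : chrNum (Subrel D (· ∈ (∅ : Finset α))) = 0 :=
  Nat.le_zero.1 (chrNum_le_of_colorable (.of_isEmpty 0))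

lemma chrNum_subrel_insert_le [DecidableEq α] (s : Finset α) (a : α) :
    chrNum (Subrel D (· ∈ insert a s)) ≤ chrNum (Subrel D (· ∈ s)) + 1 := by
  obtain ⟨C⟩ := colorable_chrNum (Subrel D (· ∈ s))
  let C' : (symmG (Subrel D (· ∈ insert a s))).Coloring
      (Option (Fin (chrNum (Subrel D (· ∈ s))))) :=
    Coloring.mk (fun x => if hx : x.1 ∈ s then some (C ⟨x.1, hx⟩) else none) ?_
  · simpa using chrNum_le_of_colorable C'.colorable
  rintro ⟨x, hx⟩ ⟨y, hy⟩ ⟨hne, hxy⟩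
  dsimp only
  split_ifs with hxs hys hys
  · exact (Option.some_injective _).ne
      (C.valid ⟨fun h => hne (Subtype.ext (Subtype.mk.inj h)), hxy⟩)
  · exact Option.some_ne_none _
  · exact (Option.some_ne_none _).symm
  · exact (hne (Subtype.ext (((Finset.mem_insert.1 hx).resolve_right hxs).trans
      ((Finset.mem_insert.1 hy).resolve_right hys).symm))).elim

lemma exists_chrNum_subrel_eq_of_le [DecidableEq α] (s : Finset α) {k : ℕ}
    (hk : k ≤ chrNum (Subrel D (· ∈ s))) : ∃ t : Finset α, chrNum (Subrel D (· ∈ t)) = k := by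
  induction s using Finset.induction_on generalizing k with
  | empty => exact ⟨∅, by rw [chrNum_subrel_empty] at hk ⊢; omega⟩
  | insert a s _ ih =>
    rcases le_or_gt k (chrNum (Subrel D (· ∈ s))) with hks | hks
    · exact ih hks
    · exact ⟨insert a s, le_antisymm (by linarith [chrNum_subrel_insert_le D s a]) hk⟩

lemma exists_chrNum_subrel_eq [Finite α] {k : ℕ} (hk : k ≤ chrNum D) :
    ∃ t : Finset α, chrNum (Subrel D (· ∈ t)) = k := by
  classical
  have := Fintype.ofFinite α
  exact exists_chrNum_subrel_eq_of_le D Finset.univ (hk.trans (chrNum_le_of_relHom_injective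
    ⟨fun a => ⟨a, Finset.mem_univ a⟩, id⟩ fun _ _ h => Subtype.ext_iff.1 h))

end Restriction

lemma pr_le {α β : Type} [Fintype α] [Fintype β] {G : α → α → Prop} {H : β → β → Prop} {n : ℕ}
    (hG : chrNum G = n) (hH : chrNum H = n) : pr n ≤ chrNum (tensorRel G H) :=
  Nat.sInf_le ⟨α, β, inferInstance, inferInstance, G, H, hG, hH, rfl⟩

lemma exists_pr_eq (n : ℕ) : ∃ (α β : Type) (_ : Fintype α) (_ : Fintype β)
    (G : α → α → Prop) (H : β → β → Prop),
    chrNum G = n ∧ chrNum H = n ∧ chrNum (tensorRel G H) = pr n :=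
  Nat.sInf_mem (s := {c | ∃ (α β : Type) (_ : Fintype α) (_ : Fintype β)
      (G : α → α → Prop) (H : β → β → Prop),
      chrNum G = n ∧ chrNum H = n ∧ chrNum (tensorRel G H) = c})
    ⟨_, Fin n, Fin n, inferInstance, inferInstance, _, _, chrNum_fin_ne n, chrNum_fin_ne n, rfl⟩

lemma pr_le_of_le_chrNum {α β : Type} [Finite α] [Finite β] {G : α → α → Prop}
    {H : β → β → Prop} {n : ℕ} (hG : n ≤ chrNum G) (hH : n ≤ chrNum H) :
    pr n ≤ chrNum (tensorRel G H) := by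
  obtain ⟨s, hs⟩ := exists_chrNum_subrel_eq G hG
  obtain ⟨t, ht⟩ := exists_chrNum_subrel_eq H hH
  refine (pr_le hs ht).trans (chrNum_le_of_relHom_injective
    ⟨Prod.map Subtype.val Subtype.val, id⟩ ?_)
  exact Subtype.val_injective.prodMap Subtype.val_injective

lemma pr_mono : Monotone pr := by
  refine monotone_nat_of_le_succ fun n => ?_
  obtain ⟨α, β, _, _, G, H, hG, hH, hGH⟩ := exists_pr_eq (n + 1)
  exact hGH ▸ pr_le_of_le_chrNum (by omega) (by omega)

/-- Bundled with its vertex type, so that the arc digraph construction can be iterated. -/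
structure FinDigraph where
  V : Type
  [finite : Finite V]
  Adj : V → V → Prop
  loopless : ∀ v, ¬ Adj v v

attribute [instance] FinDigraph.finite

namespace FinDigraph

def ofRel {α : Type} [Finite α] (G : α → α → Prop) : FinDigraph where
  V := α
  Adj u v := G u v ∧ u ≠ v
  loopless _ h := h.2 rfl

def complete (n : ℕ) : FinDigraph where
  V := Fin n
  Adj i j := i ≠ j
  loopless _ h := h rfl

def prod (X Y : FinDigraph) : FinDigraph where
  V := X.V × Y.V
  Adj := tensorRel X.Adj Y.Adj
  loopless p h := X.loopless p.1 h.1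

/-- The arc digraph `δX`: arcs `(u, v)` and `(v, w)` of `X` are joined by an arc. -/
def arc (X : FinDigraph) : FinDigraph where
  V := {p : X.V × X.V // X.Adj p.1 p.2}
  Adj e f := e.1.2 = f.1.1
  loopless e h := X.loopless e.1.1 (h ▸ e.2)

lemma chrNum_ofRel {α : Type} [Finite α] (G : α → α → Prop) :
    chrNum (ofRel G).Adj = chrNum G := by
  have : symmG (ofRel G).Adj = symmG G := by
    ext u v
    exact ⟨fun ⟨hne, h⟩ => ⟨hne, h.imp And.left And.left⟩,
      fun ⟨hne, h⟩ => ⟨hne, h.imp (⟨·, hne⟩) (⟨·, hne.symm⟩)⟩⟩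
  exact congrArg (fun Γ : SimpleGraph α => sInf {k | Γ.Colorable k}) this

def arcMap {X Y : FinDigraph} (f : X.Adj →r Y.Adj) : (arc X).Adj →r (arc Y).Adj where
  toFun e := ⟨(f e.1.1, f e.1.2), f.map_rel e.2⟩
  map_rel' h := congrArg f h

def iterateArcMap : (t : ℕ) → {X Y : FinDigraph} → (X.Adj →r Y.Adj) →
    ((arc^[t] X).Adj →r (arc^[t] Y).Adj)
  | 0, _, _, f => f
  | t + 1, _, _, f => iterateArcMap t (arcMap f)

def arcProdHom (X Y : FinDigraph) :
    tensorRel (arc X).Adj (arc Y).Adj →r (arc (X.prod Y)).Adj where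
  toFun e := ⟨((e.1.1.1, e.2.1.1), (e.1.1.2, e.2.1.2)), e.1.2, e.2.2⟩
  map_rel' h := Prod.ext_iff.2 h

def iterateArcProdHom : (t : ℕ) → (X Y : FinDigraph) →
    tensorRel (arc^[t] X).Adj (arc^[t] Y).Adj →r (arc^[t] (X.prod Y)).Adj
  | 0, _, _ => RelHom.id _
  | t + 1, X, Y => (iterateArcMap t (arcProdHom X Y)).comp (iterateArcProdHom t (arc X) (arc Y))

lemma colorable_arc_of_forall_not_subset {κ : Type} [Fintype κ] (X : FinDigraph)
    (S : X.V → Finset κ) (hS : ∀ u v, X.Adj u v → ¬ S u ⊆ S v) :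
    (symmG (arc X).Adj).Colorable (Fintype.card κ) := by
  choose φ hφS hφ using fun e : (arc X).V => Finset.not_subset.1 (hS _ _ e.2)
  refine (symmG.coloring φ fun e f (hef : e.1.2 = f.1.1) he => hφ e ?_).colorable
  exact hef ▸ he ▸ hφS f

lemma chrNum_le_two_pow_chrNum_arc (X : FinDigraph) : chrNum X.Adj ≤ 2 ^ chrNum (arc X).Adj := by
  obtain ⟨C⟩ := colorable_chrNum (arc X).Adj
  let φ (u : X.V) : Set (Fin (chrNum (arc X).Adj)) := {k | ∃ e : (arc X).V, e.1.1 = u ∧ C e = k}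
  have hφ : ∀ u v, X.Adj u v → φ u ≠ φ v := by
    intro u v huv hφuv
    let e : (arc X).V := ⟨(u, v), huv⟩
    obtain ⟨f, hfv, hfe⟩ : C e ∈ φ v := hφuv ▸ ⟨e, rfl, rfl⟩
    exact symmG.coloring_ne C (arc X).loopless (show e.1.2 = f.1.1 from hfv.symm) hfe.symm
  simpa [Fintype.card_set] using chrNum_le_of_colorable (symmG.coloring φ hφ).colorable

lemma succ_le_choose_two {c : ℕ} (hc : 4 ≤ c) : c + 1 ≤ c.choose 2 := by
  induction c, hc using Nat.le_induction with
  | base => decide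
  | succ c _ ih =>
    have : (c + 1).choose 2 = c + c.choose 2 := by
      rw [Nat.choose_succ_succ', Nat.choose_one_right]
    omega

lemma chrNum_arc_le {c : ℕ} (hc : 4 ≤ c) (X : FinDigraph) (hX : chrNum X.Adj ≤ c + 1) :
    chrNum (arc X).Adj ≤ c := by
  obtain ⟨C⟩ := chrNum_le_iff_colorable.1 hX
  obtain ⟨F⟩ : Nonempty (Fin (c + 1) ↪ {s : Finset (Fin c) // s.card = 2}) :=
    Function.Embedding.nonempty_of_card_le (by simpa using succ_le_choose_two hc)
  have hS : ∀ u v, X.Adj u v → ¬ (F (C u)).1 ⊆ (F (C v)).1 := fun u v huv hsub =>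
    symmG.coloring_ne C X.loopless huv <| F.injective <| Subtype.ext <|
      Finset.eq_of_subset_of_card_le hsub (by simp [(F _).2])
  simpa using chrNum_le_of_colorable (colorable_arc_of_forall_not_subset X _ hS)

/-- Labelling arcs into `3` by the complement of their tail and all other arcs by their head
maps the arc digraph of `K₄` to the digraph of subsets of `Fin 3` with `A → B` iff `A ⊄ B`. -/
def k4ArcLabel (a b : Fin 4) : Finset (Fin 3) :=
  if b = 3 then Finset.univ.filter (·.val ≠ a.val) else Finset.univ.filter (·.val = b.val)

lemma k4ArcLabel_not_subset :
    ∀ a b c : Fin 4, a ≠ b → b ≠ c → ¬ k4ArcLabel a b ⊆ k4ArcLabel b c := by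
  decide

lemma chrNum_arc_arc_complete_four_le : chrNum (arc (arc (complete 4))).Adj ≤ 3 :=
  chrNum_le_of_colorable <| colorable_arc_of_forall_not_subset (arc (complete 4))
    (fun e => k4ArcLabel e.1.1 e.1.2) fun e f (hef : e.1.2 = f.1.1) =>
      k4ArcLabel_not_subset _ _ _ e.2 (hef ▸ f.2) ∘ (hef ▸ ·)

lemma chrNum_arc_arc_le_three (X : FinDigraph) (hX : chrNum X.Adj ≤ 4) :
    chrNum (arc (arc X)).Adj ≤ 3 := by
  obtain ⟨C⟩ := chrNum_le_iff_colorable.1 hX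
  let f : X.Adj →r (complete 4).Adj := ⟨C, symmG.coloring_ne C X.loopless⟩
  exact (chrNum_le_of_relHom_irreflexive (arcMap (arcMap f)) (arc _).loopless).trans
    chrNum_arc_arc_complete_four_le

lemma exists_chrNum_iterate_arc_le_three (c : ℕ) :
    ∃ t, ∀ X : FinDigraph, chrNum X.Adj ≤ c → chrNum (arc^[t] X).Adj ≤ 3 := by
  induction c with
  | zero => exact ⟨2, fun X hX => chrNum_arc_arc_le_three X (by omega)⟩
  | succ c ih =>
    obtain ⟨t, ht⟩ := ih
    rcases le_or_gt c 3 with hc | hc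
    · exact ⟨2, fun X hX => chrNum_arc_arc_le_three X (by omega)⟩
    · exact ⟨t + 1, fun X hX => ht (arc X) (chrNum_arc_le hc X hX)⟩

lemma chrNum_le_iterate_two_pow (t : ℕ) (X : FinDigraph) :
    chrNum X.Adj ≤ (2 ^ ·)^[t] (chrNum (arc^[t] X).Adj) := by
  induction t generalizing X with
  | zero => exact le_rfl
  | succ t ih =>
    rw [iterate_succ_apply']
    exact (chrNum_le_two_pow_chrNum_arc X).trans (Nat.pow_le_pow_right two_pos (ih (arc X)))

end FinDigraph

open FinDigraph in
lemma pr_le_three_of_forall_le {B : ℕ} (hB : ∀ n, pr n ≤ B) (N : ℕ) : pr N ≤ 3 := by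
  obtain ⟨t, ht⟩ := exists_chrNum_iterate_arc_le_three B
  obtain ⟨α, β, _, _, G, H, hG, hH, hGH⟩ := exists_pr_eq ((2 ^ ·)^[t] N + 1)
  have hN : ∀ X : FinDigraph, (2 ^ ·)^[t] N < chrNum X.Adj → N ≤ chrNum (arc^[t] X).Adj :=
    fun X hX => le_of_not_gt fun h => (chrNum_le_iterate_two_pow t X).not_gt <|
      ((pow_right_monotone one_le_two).iterate t h.le).trans_lt hX
  have hprod : chrNum (arc^[t] ((ofRel G).prod (ofRel H))).Adj ≤ 3 :=
    ht _ ((chrNum_mono fun _ _ h => ⟨h.1.1, h.2.1⟩).trans (hGH ▸ hB _))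
  calc pr N ≤ chrNum (tensorRel (arc^[t] (ofRel G)).Adj (arc^[t] (ofRel H)).Adj) :=
        pr_le_of_le_chrNum (hN _ (by rw [chrNum_ofRel]; omega))
          (hN _ (by rw [chrNum_ofRel]; omega))
    _ ≤ chrNum (arc^[t] ((ofRel G).prod (ofRel H))).Adj :=
        chrNum_le_of_relHom_irreflexive (iterateArcProdHom t _ _) (loopless _)
    _ ≤ 3 := hprod

/-- Either `pr n ≤ 3` for all `n`, or `pr n → ∞` as `n → ∞`. -/
theorem poljak_rodl_dichotomy :
    (∀ n, pr n ≤ 3) ∨ Filter.Tendsto pr Filter.atTop Filter.atTop := by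
  by_cases hbdd : BddAbove (Set.range pr)
  · obtain ⟨B, hB⟩ := hbdd
    exact Or.inl (pr_le_three_of_forall_le fun n => hB ⟨n, rfl⟩)
  · exact Or.inr (Filter.tendsto_atTop_atTop_of_monotone' pr_mono hbdd)
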